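/- arXiv:1805.05378 — 2 statements merged into one kernel-verified Lean document; each statement's English description precedes it below -/
import Mathlib

section
/- Let M be a model category, and let f : A₁ → A₂ be a weak equivalence between objects of M that are both fibrant and cofibrant. Then f has a homotopy inverse: there exists g : A₂ → A₁ such that g ∘ f is left homotopic to the identity of A₁ and f ∘ g is left homotopic to the identity of A₂. -/
open CategoryTheory CategoryTheory.Limits

universe v u

/-- `f` is a retract of `g` in the arrow category. -/
structure ArrowRetract {M : Type u} [Category.{v} M] {X Y X' Y' : M}
    (f : X ⟶ Y) (g : X' ⟶ Y') where
  ia : X ⟶ X'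
  ra : X' ⟶ X
  ib : Y ⟶ Y'
  rb : Y' ⟶ Y
  retr_a : ia ≫ ra = 𝟙 X
  retr_b : ib ≫ rb = 𝟙 Y
  sq_i : ia ≫ g = f ≫ ib
  sq_r : ra ≫ f = g ≫ rb

/-- A model structure on a category: weak equivalences, fibrations and cofibrations
satisfying two-out-of-three, retract closure, lifting and factorization axioms. -/
structure ModelStructure (M : Type u) [Category.{v} M] where
  W : MorphismProperty M
  Fib : MorphismProperty M
  Cof : MorphismProperty M
  w_comp : ∀ {X Y Z : M} (f : X ⟶ Y) (g : Y ⟶ Z), W f → W g → W (f ≫ g)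
  w_cancel_left : ∀ {X Y Z : M} (f : X ⟶ Y) (g : Y ⟶ Z), W f → W (f ≫ g) → W g
  w_cancel_right : ∀ {X Y Z : M} (f : X ⟶ Y) (g : Y ⟶ Z), W g → W (f ≫ g) → W f
  w_retract : ∀ {X Y X' Y' : M} {f : X ⟶ Y} {g : X' ⟶ Y'}, ArrowRetract f g → W g → W f
  fib_retract : ∀ {X Y X' Y' : M} {f : X ⟶ Y} {g : X' ⟶ Y'}, ArrowRetract f g → Fib g → Fib f
  cof_retract : ∀ {X Y X' Y' : M} {f : X ⟶ Y} {g : X' ⟶ Y'}, ArrowRetract f g → Cof g → Cof f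
  lift_trivCof_fib : ∀ {A B X Y : M} (i : A ⟶ B) (p : X ⟶ Y), Cof i → W i → Fib p →
    HasLiftingProperty i p
  lift_cof_trivFib : ∀ {A B X Y : M} (i : A ⟶ B) (p : X ⟶ Y), Cof i → Fib p → W p →
    HasLiftingProperty i p
  factor_trivCof_fib : ∀ {X Y : M} (f : X ⟶ Y), ∃ (Z : M) (i : X ⟶ Z) (p : Z ⟶ Y),
    Cof i ∧ W i ∧ Fib p ∧ i ≫ p = f
  factor_cof_trivFib : ∀ {X Y : M} (f : X ⟶ Y), ∃ (Z : M) (i : X ⟶ Z) (p : Z ⟶ Y),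
    Cof i ∧ Fib p ∧ W p ∧ i ≫ p = f

/-- An object is cofibrant if the map from the initial object is a cofibration. -/
def ModelStructure.Cofibrant {M : Type u} [Category.{v} M] [HasInitial M]
    (S : ModelStructure M) (A : M) : Prop :=
  S.Cof (initial.to A)

/-- An object is fibrant if the map to the terminal object is a fibration. -/
def ModelStructure.Fibrant {M : Type u} [Category.{v} M] [HasTerminal M]
    (S : ModelStructure M) (A : M) : Prop :=
  S.Fib (terminal.from A)

/-- `h` and `k` are left homotopic: there is a cylinder object `Cyl` for `X`
(a factorization of the fold map data, with the projection a weak equivalence)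
and a homotopy `H : Cyl ⟶ Y` restricting to `h` and `k` on the two ends. -/
def LeftHomotopic {M : Type u} [Category.{v} M] (S : ModelStructure M) {X Y : M}
    (h k : X ⟶ Y) : Prop :=
  ∃ (Cyl : M) (i₀ i₁ : X ⟶ Cyl) (p : Cyl ⟶ X),
    S.W p ∧ i₀ ≫ p = 𝟙 X ∧ i₁ ≫ p = 𝟙 X ∧
    ∃ H : Cyl ⟶ Y, i₀ ≫ H = h ∧ i₁ ≫ H = k

/-! Factor `f` as a trivial cofibration `j` followed by a trivial fibration `q`. Cofibrancy of
`A₂` gives a section `s` of `q`, fibrancy of `A₁` a retraction `r` of `j`, and `s ≫ r` is a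
homotopy inverse of `f`: `j ≫ q ≫ s` and `j` agree after the trivial fibration `q`, while
`r ≫ j ≫ q` and `q` agree after the trivial cofibration `j`. -/

lemma LeftHomotopic.comp_right {M : Type u} [Category.{v} M] {S : ModelStructure M}
    {X Y Z : M} {u v : X ⟶ Y} (h : LeftHomotopic S u v) (b : Y ⟶ Z) :
    LeftHomotopic S (u ≫ b) (v ≫ b) := by
  obtain ⟨C, i₀, i₁, p, hp, h₀, h₁, H, rfl, rfl⟩ := h
  exact ⟨C, i₀, i₁, p, hp, h₀, h₁, H ≫ b, by simp, by simp⟩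

namespace ModelStructure

variable {M : Type u} [Category.{v} M] (S : ModelStructure M)

lemma w_id (X : M) : S.W (𝟙 X) := by
  obtain ⟨Z, i, p, -, -, hp, hip⟩ := S.factor_cof_trivFib (𝟙 X)
  exact S.w_retract ⟨i, p, 𝟙 X, 𝟙 X, hip, by simp, by simpa using hip, by simp⟩ hp

/-- The retract argument: `g` is a retract of the first factor of its factorization into a
trivial cofibration followed by a fibration. -/
lemma w_of_hasLiftingProperty_fib {X Y : M} (g : X ⟶ Y)
    (h : ∀ ⦃E D : M⦄ (p : E ⟶ D), S.Fib p → HasLiftingProperty g p) : S.W g := by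
  obtain ⟨Z, i, p, -, hi, hp, hip⟩ := S.factor_trivCof_fib g
  have := h p hp
  have sq : CommSq i g p (𝟙 Y) := ⟨by simp [hip]⟩
  exact S.w_retract
    ⟨𝟙 X, 𝟙 X, sq.lift, p, by simp, sq.fac_right, by simp [sq.fac_left], by simp [hip]⟩ hi

lemma w_pushout_inl {A B Y : M} (j : A ⟶ B) (hjC : S.Cof j) (hjW : S.W j) (s : A ⟶ Y)
    [HasPushout s j] : S.W (pushout.inl s j) :=
  S.w_of_hasLiftingProperty_fib _ fun _ _ p hp ↦
    have := S.lift_trivCof_fib j p hjC hjW hp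
    inferInstance

lemma exists_section_of_trivFib [HasInitial M] {E B : M} (p : E ⟶ B) (hpF : S.Fib p)
    (hpW : S.W p) (hB : S.Cofibrant B) : ∃ s : B ⟶ E, s ≫ p = 𝟙 B := by
  have := S.lift_cof_trivFib _ p hB hpF hpW
  have sq : CommSq (initial.to E) (initial.to B) p (𝟙 B) := ⟨initial.hom_ext _ _⟩
  exact ⟨sq.lift, sq.fac_right⟩

lemma exists_extension_of_trivCof [HasTerminal M] {A B X : M} (j : A ⟶ B) (hjC : S.Cof j)
    (hjW : S.W j) (hX : S.Fibrant X) (u : A ⟶ X) : ∃ e : B ⟶ X, j ≫ e = u := by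
  have := S.lift_trivCof_fib j _ hjC hjW hX
  have sq : CommSq u j (terminal.from X) (terminal.from B) := ⟨terminal.hom_ext _ _⟩
  exact ⟨sq.lift, sq.fac_left⟩

/-- The homotopy is a lift of `(u, v) : X ⨿ X ⟶ E` through a good cylinder of `X`. -/
lemma leftHomotopic_of_comp_trivFib_eq [HasBinaryCoproducts M] {X E B : M} (p : E ⟶ B)
    (hpF : S.Fib p) (hpW : S.W p) {u v : X ⟶ E} (h : u ≫ p = v ≫ p) :
    LeftHomotopic S u v := by
  obtain ⟨C, k, π, hk, -, hπ, hkπ⟩ := S.factor_cof_trivFib (codiag X)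
  have := S.lift_cof_trivFib k p hk hpF hpW
  have sq : CommSq (coprod.desc u v) k p (π ≫ u ≫ p) :=
    ⟨by ext <;> simp [reassoc_of% hkπ, h]⟩
  exact ⟨C, coprod.inl ≫ k, coprod.inr ≫ k, π, hπ, by simp [hkπ, coprod.inl_desc],
    by simp [hkπ, coprod.inr_desc], sq.lift, by simp [sq.fac_left, coprod.inl_desc],
    by simp [sq.fac_left, coprod.inr_desc]⟩

/-- The codiagonal `B ⨿_A B ⟶ B` is a weak equivalence, so it factors as a trivial cofibration
followed by a trivial fibration, and `(u, v)` extends along the former since `X` is fibrant. -/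
lemma leftHomotopic_comp_of_trivCof_eq [HasTerminal M] [HasBinaryCoproducts M]
    {A B X Y : M} (j : A ⟶ B) [HasPushout j j] (hjC : S.Cof j) (hjW : S.W j)
    (hX : S.Fibrant X) {u v : B ⟶ X} (h : j ≫ u = j ≫ v) (a : Y ⟶ B) :
    LeftHomotopic S (a ≫ u) (a ≫ v) := by
  have hinl : S.W (pushout.inl j j) := S.w_pushout_inl j hjC hjW j
  have hcodiag : S.W (pushout.codiagonal j) :=
    S.w_cancel_left _ _ hinl (by simpa using S.w_id B)
  obtain ⟨Q, i, π, hiC, hπF, hπW, hiπ⟩ := S.factor_cof_trivFib (pushout.codiagonal j)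
  have hiW : S.W i := S.w_cancel_right i π hπW (hiπ ▸ hcodiag)
  obtain ⟨e, he⟩ := S.exists_extension_of_trivCof i hiC hiW hX (pushout.desc u v h)
  have H : LeftHomotopic S (a ≫ pushout.inl j j ≫ i) (a ≫ pushout.inr j j ≫ i) :=
    S.leftHomotopic_of_comp_trivFib_eq π hπF hπW (by simp [hiπ])
  simpa [he, pushout.inl_desc, pushout.inr_desc] using H.comp_right e

end ModelStructure

theorem weq_has_homotopy_inverse_general
    (M : Type u) [Category.{v} M] [HasInitial M] [HasTerminal M] [HasFiniteColimits M]
    (S : ModelStructure M) {A₁ A₂ : M}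
    (hf₁ : S.Fibrant A₁) (hc₂ : S.Cofibrant A₂) (hf₂ : S.Fibrant A₂)
    (f : A₁ ⟶ A₂) (hf : S.W f) :
    ∃ g : A₂ ⟶ A₁, LeftHomotopic S (f ≫ g) (𝟙 A₁) ∧ LeftHomotopic S (g ≫ f) (𝟙 A₂) := by
  obtain ⟨C, j, q, hjC, hqF, hqW, rfl⟩ := S.factor_cof_trivFib f
  have hjW : S.W j := S.w_cancel_right j q hqW hf
  obtain ⟨s, hs⟩ := S.exists_section_of_trivFib q hqF hqW hc₂
  obtain ⟨r, hr⟩ := S.exists_extension_of_trivCof j hjC hjW hf₁ (𝟙 A₁)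
  refine ⟨s ≫ r, ?_, ?_⟩
  · have H : LeftHomotopic S (j ≫ q ≫ s) j :=
      S.leftHomotopic_of_comp_trivFib_eq q hqF hqW (by simp [hs])
    simpa [hr] using H.comp_right r
  · have H : LeftHomotopic S (s ≫ r ≫ j ≫ q) (s ≫ q) :=
      S.leftHomotopic_comp_of_trivCof_eq j hjC hjW hf₂ (by simp [reassoc_of% hr]) s
    simpa [hs] using H

/-- Whitehead's theorem: a weak equivalence between fibrant-cofibrant objects is a
homotopy equivalence. -/
theorem weq_has_homotopy_inverse
    (M : Type u) [Category.{v} M] [HasInitial M] [HasTerminal M] [HasFiniteColimits M]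
    (S : ModelStructure M) {A₁ A₂ : M}
    (hc₁ : S.Cofibrant A₁) (hf₁ : S.Fibrant A₁) (hc₂ : S.Cofibrant A₂) (hf₂ : S.Fibrant A₂)
    (f : A₁ ⟶ A₂) (hf : S.W f) :
    ∃ g : A₂ ⟶ A₁, LeftHomotopic S (f ≫ g) (𝟙 A₁) ∧ LeftHomotopic S (g ≫ f) (𝟙 A₂) :=
  weq_has_homotopy_inverse_general M S hf₁ hc₂ hf₂ f hf
end

section
/- Hovey's criterion (one direction): Let (L, R) be a Quillen pair between model categories C and D such that (i) R reflects weak equivalences between fibrant objects, and (ii) for every cofibrant A in C, the composite A → R(L A) → R(fibrant replacement of L A) is a weak equivalence. Then (L, R) is a Quillen equivalence. -/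
open CategoryTheory CategoryTheory.Limits

universe v u

/-- Hovey's criterion: a Quillen pair `(L, R)` is a Quillen equivalence provided
(i) `R` reflects weak equivalences between fibrant objects, and (ii) for every
cofibrant `A`, the composite of the unit with `R` applied to a fibrant replacement of
`L A` is a weak equivalence. -/
theorem quillen_equivalence_of_hovey_criterion
    (C D : Type u) [Category.{v} C] [Category.{v} D] [HasInitial C] [HasTerminal D]
    (SC : ModelStructure C) (SD : ModelStructure D)
    (L : C ⥤ D) (R : D ⥤ C) (adj : L ⊣ R)
    (hCof : ∀ {X Y : C} (f : X ⟶ Y), SC.Cof f → SD.Cof (L.map f))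
    (hTrivCof : ∀ {X Y : C} (f : X ⟶ Y), SC.Cof f → SC.W f → SD.Cof (L.map f) ∧ SD.W (L.map f))
    (hReflect : ∀ {B B' : D} (f : B ⟶ B'), SD.Fibrant B → SD.Fibrant B' →
      SC.W (R.map f) → SD.W f)
    (hUnit : ∀ (A : C), SC.Cofibrant A → ∀ {Z : D} (r : L.obj A ⟶ Z), SD.W r →
      SD.Fibrant Z → SC.W (adj.unit.app A ≫ R.map r)) :
    ∀ (A : C) (B : D), SC.Cofibrant A → SD.Fibrant B → ∀ f : L.obj A ⟶ B,
      (SD.W f ↔ SC.W (adj.homEquiv A B f)) := by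
  intro A B hA hB f
  constructor
  · intro hf
    have h := hUnit A hA f hf hB
    rwa [adj.homEquiv_unit]
  · intro hf
    obtain ⟨Z, r, p, hrc, hrw, hpf, hcomp⟩ := SD.factor_trivCof_fib (terminal.from (L.obj A))
    have hZ : SD.Fibrant Z := by
      have hp : terminal.from Z = p := Subsingleton.elim _ _
      rw [ModelStructure.Fibrant, hp]; exact hpf
    have hlift := SD.lift_trivCof_fib r (terminal.from B) hrc hrw hB
    have sq : CommSq f r (terminal.from B) (terminal.from Z) := ⟨Subsingleton.elim _ _⟩
    obtain ⟨⟨lft⟩⟩ := hlift.sq_hasLift sq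
    have hg : r ≫ lft.l = f := lft.fac_left
    have hu := hUnit A hA r hrw hZ
    have heq : adj.unit.app A ≫ R.map f = (adj.unit.app A ≫ R.map r) ≫ R.map lft.l := by
      rw [Category.assoc, ← R.map_comp, hg]
    rw [adj.homEquiv_unit] at hf
    have hRg : SC.W (R.map lft.l) :=
      SC.w_cancel_left _ _ hu (by rw [← heq]; exact hf)
    have hgW : SD.W lft.l := hReflect lft.l hZ hB hRg
    rw [← hg]
    exact SD.w_comp _ _ hrw hgW
end
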